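/- Let G be a connected weighted multigraph in which every vertex has valence ≥ 2, polarized by q ≡ 0, of genus g = m − n + 1 ≥ 2, and let e_1 be a non-loop edge. Then for all fixed positive lengths ℓ_2,…,ℓ_m, lim_{t→0+} φ_G(t, ℓ_2,…,ℓ_m) = φ_{G/e_1}(ℓ_2,…,ℓ_m), where G/e_1 carries the polarization q ≡ 0 (and has the same genus g). -/

import Mathlib

open scoped Classical
open Matrix Filter Topology

/-- A weighted multigraph with vertex type `V` and edge index type `E`:
each edge is assigned an (ordered representative of an unordered) pair of endpoints. -/
structure WMG (V E : Type) where
  ends : E → V × V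

namespace WMG

variable {V E : Type} [Fintype V] [DecidableEq V] [Fintype E] [DecidableEq E]

/-- `a` and `b` are joined by some edge belonging to `S`. -/
def Step (G : WMG V E) (S : Set E) (a b : V) : Prop :=
  ∃ k ∈ S, G.ends k = (a, b) ∨ G.ends k = (b, a)

/-- Any two vertices can be joined by a walk using only edges from `S`. -/
def ConnectedVia (G : WMG V E) (S : Set E) : Prop :=
  ∀ a b : V, Relation.ReflTransGen (G.Step S) a b

/-- `G` is connected. -/
def Connected (G : WMG V E) : Prop := G.ConnectedVia Set.univ

/-- A set `T` of edges is a spanning tree: it has `#V - 1` edges and connects all vertices. -/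
def IsSpanningTree (G : WMG V E) (T : Finset E) : Prop :=
  T.card + 1 = Fintype.card V ∧ G.ConnectedVia ↑T

/-- `η_G(ℓ) = Σ_{T spanning tree} Π_{k ∉ T} ℓ_k`. -/
noncomputable def eta (G : WMG V E) (ℓ : E → ℝ) : ℝ :=
  ∑ T : Finset E, if G.IsSpanningTree T then ∏ k ∈ Tᶜ, ℓ k else 0

/-- The weighted Laplacian matrix of `G`. -/
noncomputable def lap (G : WMG V E) (ℓ : E → ℝ) : Matrix V V ℝ :=
  Matrix.of fun a b =>
    if a = b then
      ∑ k : E, if ((G.ends k).1 = a ∨ (G.ends k).2 = a) ∧ (G.ends k).1 ≠ (G.ends k).2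
        then (ℓ k)⁻¹ else 0
    else
      - ∑ k : E, if G.ends k = (a, b) ∨ G.ends k = (b, a) then (ℓ k)⁻¹ else 0

/-- The standard basis vector (point mass) at a vertex. -/
def delta (a : V) : V → ℝ := fun x => if x = a then 1 else 0

/-- Effective resistance `r(a,b)`: the entry at `a` of the unique solution `h` of
`Q^{(b)} h = u_a` (the Laplacian with row and column `b` deleted).  Equivalently, writing
`h̃` for the extension of `h` by `h̃ b = 0`, it is the entry at `a` of the unique `v` with
`Q v = δ_a - δ_b` and `v b = 0` (the two systems have the same solutions since all row and
column sums of `Q` vanish).  We set `r(a,a) = 0`; this is automatic in the connected case. -/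
noncomputable def res (G : WMG V E) (ℓ : E → ℝ) (a b : V) : ℝ :=
  if h : ∃! v : V → ℝ, G.lap ℓ *ᵥ v = delta a - delta b ∧ v b = 0
  then h.exists.choose a else 0

/-- The valence of a vertex (loop edges counted twice). -/
def valence (G : WMG V E) (a : V) : ℕ :=
  ∑ k : E, ((if (G.ends k).1 = a then 1 else 0) + (if (G.ends k).2 = a then 1 else 0))

/-- The genus of the polarized graph `(G, q)`: `g = #E - #V + 1 + Σ_a q(a)`. -/
def genus (G : WMG V E) (q : V → ℕ) : ℤ :=
  (Fintype.card E : ℤ) - (Fintype.card V : ℤ) + 1 + ∑ a, (q a : ℤ)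

/-- The canonical divisor `K(a) = 2 q(a) + v(a) - 2`, as a real number. -/
noncomputable def Kdiv (G : WMG V E) (q : V → ℕ) (a : V) : ℝ :=
  2 * (q a : ℝ) + (G.valence a : ℝ) - 2

/-- `F(e_k) = 1 - r(e_k)/ℓ_k` where `r(e_k)` is the resistance between the endpoints. -/
noncomputable def Fres (G : WMG V E) (ℓ : E → ℝ) (k : E) : ℝ :=
  1 - G.res ℓ (G.ends k).1 (G.ends k).2 / ℓ k

/-- Zhang's invariant `ε` of the polarized metric graph, via the paper's explicit formula. -/
noncomputable def epsilon (G : WMG V E) (q : V → ℕ) (ℓ : E → ℝ) : ℝ :=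
  (1 / (G.genus q : ℝ)) * ∑ a, ∑ b, (q a : ℝ) * G.Kdiv q b * G.res ℓ a b
  + (((G.genus q : ℝ) - 1) / (3 * (G.genus q : ℝ))) * ∑ k, (G.Fres ℓ k) ^ 2 * ℓ k
  + (1 / (2 * (G.genus q : ℝ))) * ∑ a, G.Kdiv q a *
      ∑ k, G.Fres ℓ k * (G.res ℓ a (G.ends k).1 + G.res ℓ a (G.ends k).2)

/-- `r(K, K) = Σ_{a,b} K(a) K(b) r(a,b)`. -/
noncomputable def rKK (G : WMG V E) (q : V → ℕ) (ℓ : E → ℝ) : ℝ :=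
  ∑ a, ∑ b, G.Kdiv q a * G.Kdiv q b * G.res ℓ a b

/-- Zhang's invariant `φ` of the polarized metric graph, via the paper's explicit formula
`φ = ((5g-2)/(4(g-1))) ε - (3/(8(g-1))) r(K,K) - ℓ(G)/4`. -/
noncomputable def phi (G : WMG V E) (q : V → ℕ) (ℓ : E → ℝ) : ℝ :=
  ((5 * (G.genus q : ℝ) - 2) / (4 * ((G.genus q : ℝ) - 1))) * G.epsilon q ℓ
  - (3 / (8 * ((G.genus q : ℝ) - 1))) * G.rKK q ℓ
  - (∑ k, ℓ k) / 4

/-- The map on vertices identifying `b` with `a` (realized on the subtype omitting `b`). -/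
def fuseV (a b : V) (hab : a ≠ b) (x : V) : {y : V // y ≠ b} :=
  if h : x = b then ⟨a, hab⟩ else ⟨x, h⟩

/-- The fusion `G'` of two distinct vertices `a, b` of `G`: identify `a` and `b`,
keeping all edges and lengths. -/
def fuse (G : WMG V E) (a b : V) (hab : a ≠ b) : WMG {y : V // y ≠ b} E :=
  ⟨fun k => (fuseV a b hab (G.ends k).1, fuseV a b hab (G.ends k).2)⟩

/-- The contraction `G/e` of a non-loop edge: identify the two endpoints of `e`,
delete `e`, and keep all other edges. -/
def contract (G : WMG V E) (k0 : E) (hk : (G.ends k0).1 ≠ (G.ends k0).2) :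
    WMG {y : V // y ≠ (G.ends k0).2} {k : E // k ≠ k0} :=
  ⟨fun k => (fuseV (G.ends k0).1 (G.ends k0).2 hk (G.ends k.1).1,
             fuseV (G.ends k0).1 (G.ends k0).2 hk (G.ends k.1).2)⟩

end WMG

/-- The `i`-th elementary symmetric polynomial of the family `ℓ`. -/
noncomputable def esymE {E : Type} [Fintype E] [DecidableEq E] (i : ℕ) (ℓ : E → ℝ) : ℝ :=
  ∑ s ∈ Finset.powersetCard i (Finset.univ : Finset E), ∏ k ∈ s, ℓ k

/-!
Write the Laplacian as `Q_ℓ = ∑ₖ ℓₖ⁻¹ bₖ bₖᵀ`, where `bₖ = δ_{e⁻} - δ_{e⁺}` is the signed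
incidence vector. Setting `ℓ_{k0} = t` is then a rank-one update of `Q` at `ℓ_{k0} = 1`, so by
Sherman–Morrison each resistance `r_t(a, b)` is a rational function of `t`, continuous at `t = 0`.
If `Q h = δ_a - δ_b` and `Q z = b_{k0}`, its value at `t = 0` is `w a` for
`w = h - (⟨h, b_{k0}⟩ / ⟨z, b_{k0}⟩) z`. This potential takes the same value at both ends of
`e_{k0}`, so it descends to `G/e_{k0}` and solves the contracted equation
`Q' w = δ_a - δ_b` there; hence `r_t(a, b) → r_{G/e}(a, b)`. In the same way `r_t(e_{k0}) / t → 1`,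
so `F(e_{k0}) → 0`. Finally, for `q ≡ 0` the divisor `K_{G/e}` is the pushforward of `K_G` along
the fusing map and the genus does not change, so every term of `φ` converges to its counterpart
for `G/e_{k0}`.
-/

open Finset

theorem tendsto_fintype_sum_of_tendsto_zero {α ι : Type} [Fintype ι] [DecidableEq ι]
    {l : Filter α} {f : α → ι → ℝ} {i₀ : ι} {g : {i // i ≠ i₀} → ℝ}
    (h₀ : Tendsto (fun x => f x i₀) l (𝓝 0))
    (h : ∀ i : {i // i ≠ i₀}, Tendsto (fun x => f x i) l (𝓝 (g i))) :
    Tendsto (fun x => ∑ i, f x i) l (𝓝 (∑ i, g i)) := by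
  simp_rw [Fintype.sum_eq_add_sum_subtype_ne _ i₀]
  simpa using h₀.add (tendsto_finsetSum _ fun i _ => h i)

namespace WMG

variable {V E : Type}

section Pushforward

variable [Fintype V] {W : Type} [DecidableEq W]

def pushforward (π : V → W) : (V → ℝ) →ₗ[ℝ] W → ℝ where
  toFun f w := ∑ y with π y = w, f y
  map_add' f g := by ext w; simp [sum_add_distrib]
  map_smul' c f := by ext w; simp [mul_sum]

theorem pushforward_apply (π : V → W) (f : V → ℝ) (w : W) :
    pushforward π f w = ∑ y with π y = w, f y := rfl

theorem pushforward_delta [DecidableEq V] (π : V → W) (y : V) :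
    pushforward π (delta y) = delta (π y) := by
  ext w
  simp [pushforward_apply, delta, eq_comm]

theorem sum_pushforward_mul [Fintype W] (π : V → W) (f : V → ℝ) (F : W → ℝ) :
    ∑ w, pushforward π f w * F w = ∑ y, f y * F (π y) := by
  rw [← sum_fiberwise univ π fun y => f y * F (π y)]
  refine sum_congr rfl fun w _ => ?_
  rw [pushforward_apply, sum_mul]
  exact sum_congr rfl fun y hy => by rw [(mem_filter.1 hy).2]

theorem dotProduct_pushforward [Fintype W] (π : V → W) (u : W → ℝ) (f : V → ℝ) :
    u ⬝ᵥ pushforward π f = (fun y => u (π y)) ⬝ᵥ f := by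
  simp only [dotProduct, mul_comm (u _), sum_pushforward_mul]

end Pushforward

variable [DecidableEq V]

section Laplacian

variable (G : WMG V E)

def incidence (k : E) : V → ℝ := delta (G.ends k).1 - delta (G.ends k).2

theorem lap_eq_sum [Fintype E] (ℓ : E → ℝ) :
    G.lap ℓ = ∑ k, (ℓ k)⁻¹ • vecMulVec (G.incidence k) (G.incidence k) := by
  ext x y
  simp only [lap, of_apply, Matrix.sum_apply, Matrix.smul_apply, vecMulVec_apply, incidence,
    Pi.sub_apply, delta, smul_eq_mul]
  split_ifs with hxy
  · subst hxy
    refine sum_congr rfl fun k _ => ?_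
    rcases G.ends k with ⟨u, w⟩
    by_cases hu : x = u <;> by_cases hw : x = w <;> by_cases huw : u = w <;> simp_all [eq_comm]
  · rw [← sum_neg_distrib]
    refine sum_congr rfl fun k _ => ?_
    rcases G.ends k with ⟨u, w⟩
    by_cases hu : x = u <;> by_cases hw : y = w <;> by_cases hu' : y = u <;>
      by_cases hw' : x = w <;> simp_all [eq_comm]

variable [Fintype V]

theorem dotProduct_delta (v : V → ℝ) (a : V) : v ⬝ᵥ delta a = v a := by
  simp [dotProduct, delta]

theorem sum_delta : ∑ a : V, delta a = 1 := by
  ext x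
  simp [delta]

theorem sum_delta_sub_delta (a b : V) : ∑ x, (delta a - delta b) x = 0 := by
  simp [delta, sum_sub_distrib]

theorem dotProduct_incidence (v : V → ℝ) (k : E) :
    v ⬝ᵥ G.incidence k = v (G.ends k).1 - v (G.ends k).2 := by
  simp [incidence, dotProduct_sub, dotProduct_delta]

variable {G}

theorem eq_of_forall_dotProduct_incidence_eq_zero (hG : G.Connected) {v : V → ℝ}
    (hv : ∀ k, v ⬝ᵥ G.incidence k = 0) (a b : V) : v a = v b := by
  induction hG a b with
  | refl => rfl
  | tail _ hstep ih =>
    obtain ⟨k, -, hk | hk⟩ := hstep <;>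
    · have := hv k
      rw [dotProduct_incidence, hk, sub_eq_zero] at this
      simp only at this
      rw [ih, this]

variable (G) [Fintype E]

theorem lap_mulVec (ℓ : E → ℝ) (v : V → ℝ) :
    G.lap ℓ *ᵥ v = ∑ k, ((ℓ k)⁻¹ * (v ⬝ᵥ G.incidence k)) • G.incidence k := by
  simp only [lap_eq_sum, Matrix.sum_mulVec, smul_mulVec, vecMulVec_mulVec, op_smul_eq_smul,
    smul_smul, dotProduct_comm]

theorem dotProduct_lap_mulVec (ℓ : E → ℝ) (v : V → ℝ) :
    v ⬝ᵥ (G.lap ℓ *ᵥ v) = ∑ k, (ℓ k)⁻¹ * (v ⬝ᵥ G.incidence k) ^ 2 := by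
  simp only [lap_mulVec, dotProduct_sum, dotProduct_smul, smul_eq_mul]
  exact sum_congr rfl fun k _ => by ring

theorem lap_mulVec_const (ℓ : E → ℝ) (c : ℝ) : G.lap ℓ *ᵥ (fun _ => c) = 0 := by
  simp [lap_mulVec, dotProduct_incidence]

theorem sum_lap_mulVec (ℓ : E → ℝ) (v : V → ℝ) : ∑ x, (G.lap ℓ *ᵥ v) x = 0 := by
  simp only [lap_mulVec, Finset.sum_apply, Pi.smul_apply, smul_eq_mul, incidence]
  rw [sum_comm]
  simp [← mul_sum, delta]

variable {G} {ℓ : E → ℝ}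

theorem dotProduct_lap_mulVec_nonneg (hℓ : ∀ k, 0 < ℓ k) (v : V → ℝ) :
    0 ≤ v ⬝ᵥ (G.lap ℓ *ᵥ v) := by
  rw [dotProduct_lap_mulVec]
  exact sum_nonneg fun k _ => mul_nonneg (inv_nonneg.2 (hℓ k).le) (sq_nonneg _)

theorem eq_of_dotProduct_lap_mulVec_eq_zero (hG : G.Connected) (hℓ : ∀ k, 0 < ℓ k)
    {v : V → ℝ} (hv : v ⬝ᵥ (G.lap ℓ *ᵥ v) = 0) (a b : V) : v a = v b := by
  rw [dotProduct_lap_mulVec] at hv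
  refine eq_of_forall_dotProduct_incidence_eq_zero hG (fun k => ?_) a b
  have hk := (sum_eq_zero_iff_of_nonneg fun k _ =>
    mul_nonneg (inv_nonneg.2 (hℓ k).le) (sq_nonneg (v ⬝ᵥ G.incidence k))).1 hv k (mem_univ k)
  simpa [(hℓ k).ne'] using hk

theorem dotProduct_lap_mulVec_pos (hG : G.Connected) (hℓ : ∀ k, 0 < ℓ k) {v : V → ℝ}
    (hv : G.lap ℓ *ᵥ v ≠ 0) : 0 < v ⬝ᵥ (G.lap ℓ *ᵥ v) := by
  refine (dotProduct_lap_mulVec_nonneg hℓ v).lt_of_ne fun h => hv ?_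
  obtain ⟨b, -⟩ := Function.ne_iff.1 hv
  rw [show v = fun _ => v b from
    funext fun a => eq_of_dotProduct_lap_mulVec_eq_zero hG hℓ h.symm a b]
  exact lap_mulVec_const G ℓ _

theorem exists_lap_mulVec_eq (hG : G.Connected) (hℓ : ∀ k, 0 < ℓ k) [Nonempty V]
    {f : V → ℝ} (hf : ∑ x, f x = 0) : ∃ v, G.lap ℓ *ᵥ v = f := by
  -- `Q + J` (with `J` the all-ones matrix) is injective, and solutions of `(Q + J) v = f`
  -- automatically have `∑ v = 0`.
  set B := G.lap ℓ + of fun _ _ => (1 : ℝ)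
  have hB : ∀ v, B *ᵥ v = G.lap ℓ *ᵥ v + fun _ => ∑ x, v x := fun v => by
    ext x; simp [B, mulVec, dotProduct, add_mul, sum_add_distrib]
  have hcard : (0 : ℝ) < Fintype.card V := by exact_mod_cast Fintype.card_pos
  have hinj : Function.Injective B.mulVecLin := by
    rw [← LinearMap.ker_eq_bot, LinearMap.ker_eq_bot']
    intro v hv
    have hQ : G.lap ℓ *ᵥ v = fun _ => -∑ x, v x := by
      ext x; have := congrFun (hB v) x; simp only [Pi.add_apply] at this
      have hx : (B *ᵥ v) x = 0 := congrFun hv x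
      linarith
    have hsum : ∑ x, v x = 0 := by
      have h := dotProduct_lap_mulVec_nonneg (G := G) hℓ v
      rw [hQ, show v ⬝ᵥ (fun _ => -∑ x, v x) = -(∑ x, v x) ^ 2 by
        simp [dotProduct, ← sum_mul]; ring] at h
      nlinarith [sq_nonneg (∑ x, v x)]
    have hconst : ∀ a b, v a = v b := eq_of_dotProduct_lap_mulVec_eq_zero hG hℓ (by simp [hQ, hsum])
    ext a
    have : (Fintype.card V : ℝ) * v a = 0 := by
      rw [← hsum]; simp [fun x => hconst x a]
    simpa [hcard.ne'] using this
  obtain ⟨v, hv⟩ := LinearMap.injective_iff_surjective.1 hinj f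
  have hv' : G.lap ℓ *ᵥ v + (fun _ => ∑ x, v x) = f := (hB v).symm.trans hv
  have hsum : ∑ x, v x = 0 := by
    have h := congrArg (fun w : V → ℝ => ∑ x, w x) hv'
    simp only [Pi.add_apply, sum_add_distrib, sum_lap_mulVec, hf, sum_const, card_univ,
      nsmul_eq_mul, zero_add] at h
    simpa [hcard.ne'] using h
  exact ⟨v, by simpa [hsum, Pi.zero_def.symm] using hv'⟩

theorem existsUnique_lap_mulVec_eq (hG : G.Connected) (hℓ : ∀ k, 0 < ℓ k) {f : V → ℝ}
    (hf : ∑ x, f x = 0) (b : V) : ∃! v : V → ℝ, G.lap ℓ *ᵥ v = f ∧ v b = 0 := by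
  have : Nonempty V := ⟨b⟩
  obtain ⟨v, hv⟩ := exists_lap_mulVec_eq hG hℓ hf
  refine ⟨v - fun _ => v b, ⟨?_, by simp⟩, ?_⟩
  · rw [mulVec_sub, hv, lap_mulVec_const, sub_zero]
  · rintro w ⟨hw, hwb⟩
    have hker : G.lap ℓ *ᵥ (w - (v - fun _ => v b)) = 0 := by
      rw [mulVec_sub, mulVec_sub, hw, hv, lap_mulVec_const]; simp
    ext a
    have := eq_of_dotProduct_lap_mulVec_eq_zero hG hℓ (by rw [hker, dotProduct_zero]) a b
    simp only [Pi.sub_apply, hwb] at this ⊢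
    linarith

theorem res_eq_of_lap_mulVec_eq (hG : G.Connected) (hℓ : ∀ k, 0 < ℓ k) {a b : V}
    {v : V → ℝ} (hv : G.lap ℓ *ᵥ v = delta a - delta b) (hvb : v b = 0) :
    G.res ℓ a b = v a := by
  have h := existsUnique_lap_mulVec_eq hG hℓ (sum_delta_sub_delta a b) b
  rw [res, dif_pos h, h.unique h.exists.choose_spec ⟨hv, hvb⟩]

theorem dotProduct_incidence_pos (hG : G.Connected) {k0 : E} (hk : (G.ends k0).1 ≠ (G.ends k0).2)
    (hℓ : ∀ k, 0 < ℓ k) {z : V → ℝ} (hz : G.lap ℓ *ᵥ z = G.incidence k0) :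
    0 < z ⬝ᵥ G.incidence k0 := by
  rw [← hz]
  refine dotProduct_lap_mulVec_pos hG hℓ fun h0 => ?_
  have := congrFun (hz.symm.trans h0) (G.ends k0).1
  simp [incidence, delta, hk] at this

end Laplacian

theorem rKK_eq_sum_mul [Fintype V] [Fintype E] (G : WMG V E) (q : V → ℕ) (ℓ : E → ℝ) :
    G.rKK q ℓ = ∑ a, G.Kdiv q a * ∑ b, G.Kdiv q b * G.res ℓ a b := by
  simp only [rKK, mul_sum, mul_assoc]

theorem Kdiv_zero_polarization [Fintype E] (G : WMG V E) :
    G.Kdiv (fun _ => 0) = (fun a => (G.valence a : ℝ)) - (2 : ℝ) • 1 := by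
  ext a
  simp [Kdiv]

theorem epsilon_zero_polarization [Fintype V] [Fintype E] (G : WMG V E) (ℓ : E → ℝ) :
    G.epsilon (fun _ => 0) ℓ
      = ((G.genus (fun _ => 0) : ℝ) - 1) / (3 * (G.genus (fun _ => 0) : ℝ))
          * ∑ k, G.Fres ℓ k ^ 2 * ℓ k
        + 1 / (2 * (G.genus (fun _ => 0) : ℝ)) * ∑ a, G.Kdiv (fun _ => 0) a *
            ∑ k, G.Fres ℓ k * (G.res ℓ a (G.ends k).1 + G.res ℓ a (G.ends k).2) := by
  simp [epsilon]

section Contraction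

theorem val_fuseV {p q : V} (hpq : p ≠ q) (y : V) :
    (fuseV p q hpq y : V) = if y = q then p else y := by
  unfold fuseV; split_ifs <;> rfl

theorem fuseV_of_ne {p q : V} (hpq : p ≠ q) {y : V} (hy : y ≠ q) :
    fuseV p q hpq y = ⟨y, hy⟩ := dif_neg hy

theorem fuseV_left {p q : V} (hpq : p ≠ q) : fuseV p q hpq p = ⟨p, hpq⟩ := fuseV_of_ne hpq hpq

theorem fuseV_right {p q : V} (hpq : p ≠ q) : fuseV p q hpq q = ⟨p, hpq⟩ := dif_pos rfl

theorem fuseV_val {p q : V} (hpq : p ≠ q) (x : {y : V // y ≠ q}) : fuseV p q hpq x = x :=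
  fuseV_of_ne hpq x.2

theorem apply_val_fuseV {p q : V} (hpq : p ≠ q) {v : V → ℝ} (hv : v p = v q) (y : V) :
    v (fuseV p q hpq y) = v y := by
  rw [val_fuseV]; split_ifs with h <;> simp [h, hv]

theorem pushforward_fuseV_one [Fintype V] {p q : V} (hpq : p ≠ q) :
    pushforward (fuseV p q hpq) 1 = 1 + delta ⟨p, hpq⟩ := by
  rw [← sum_delta, map_sum, Fintype.sum_eq_add_sum_subtype_ne _ q, ← sum_delta]
  simp [pushforward_delta, fuseV_right, fuseV_val, add_comm]

variable (G : WMG V E) (k0 : E) (hk : (G.ends k0).1 ≠ (G.ends k0).2)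

theorem connected_contract (hG : G.Connected) : (G.contract k0 hk).Connected := by
  set π := fuseV (G.ends k0).1 (G.ends k0).2 hk
  have hlift : ∀ x y, Relation.ReflTransGen (G.Step Set.univ) x y →
      Relation.ReflTransGen ((G.contract k0 hk).Step Set.univ) (π x) (π y) := by
    intro x y hxy
    induction hxy with
    | refl => exact .refl
    | @tail m c _ hmc ih =>
      obtain ⟨k, -, hkmc⟩ := hmc
      by_cases hkk : k = k0
      · subst hkk
        have hπ : π (G.ends k).1 = π (G.ends k).2 := (fuseV_left hk).trans (fuseV_right hk).symm
        have hmc : π m = π c := by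
          rcases hkmc with h | h <;> simp only [h] at hπ
          exacts [hπ, hπ.symm]
        rwa [← hmc]
      · exact ih.tail ⟨⟨k, hkk⟩, trivial, by rcases hkmc with h | h <;> simp [contract, h, π]⟩
  intro a b
  simpa only [π, fuseV_val] using hlift a b (hG a b)

theorem valence_eq_sum [Fintype E] :
    (fun a => (G.valence a : ℝ)) = ∑ k, (delta (G.ends k).1 + delta (G.ends k).2) := by
  ext a
  simp [valence, delta, eq_comm]

variable [Fintype V]

theorem incidence_contract (k : {k : E // k ≠ k0}) :
    (G.contract k0 hk).incidence k
      = pushforward (fuseV (G.ends k0).1 (G.ends k0).2 hk) (G.incidence k.1) := by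
  simp [incidence, contract, pushforward_delta]

theorem pushforward_incidence_self :
    pushforward (fuseV (G.ends k0).1 (G.ends k0).2 hk) (G.incidence k0) = 0 := by
  simp [incidence, pushforward_delta, fuseV_left, fuseV_right]

theorem genus_contract [Fintype E] [DecidableEq E] :
    (G.contract k0 hk).genus (fun _ => 0) = G.genus (fun _ => 0) := by
  have hcard : ∀ {α : Type} [Fintype α] [DecidableEq α] (a : α),
      (Fintype.card {x // x ≠ a} : ℤ) = Fintype.card α - 1 := by
    intro α _ _ a
    have := Fintype.card_pos_iff.2 ⟨a⟩
    simp only [ne_eq, Fintype.card_subtype_compl, Fintype.card_unique]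
    omega
  simp only [genus, hcard, Nat.cast_zero, sum_const_zero]
  ring

variable [Fintype E] [DecidableEq E]

theorem lap_contract_mulVec (ℓ : E → ℝ) {v : V → ℝ} (hv : v (G.ends k0).1 = v (G.ends k0).2) :
    (G.contract k0 hk).lap (fun k => ℓ k.1) *ᵥ (fun y => v y)
      = pushforward (fuseV (G.ends k0).1 (G.ends k0).2 hk) (G.lap ℓ *ᵥ v) := by
  rw [lap_mulVec, lap_mulVec, map_sum, Fintype.sum_eq_add_sum_subtype_ne _ k0]
  simp only [incidence_contract, dotProduct_pushforward, apply_val_fuseV hk hv]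
  simp [dotProduct_incidence, hv]

theorem Kdiv_contract :
    (G.contract k0 hk).Kdiv (fun _ => 0)
      = pushforward (fuseV (G.ends k0).1 (G.ends k0).2 hk) (G.Kdiv (fun _ => 0)) := by
  rw [Kdiv_zero_polarization, Kdiv_zero_polarization, map_sub, map_smul, pushforward_fuseV_one,
    valence_eq_sum, valence_eq_sum, map_sum, Fintype.sum_eq_add_sum_subtype_ne _ k0]
  ext x
  simp [pushforward_delta, fuseV_left, fuseV_right, contract]
  ring

theorem sum_Kdiv_mul_fuseV (F : {y : V // y ≠ (G.ends k0).2} → ℝ) :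
    ∑ a, G.Kdiv (fun _ => 0) a * F (fuseV (G.ends k0).1 (G.ends k0).2 hk a)
      = ∑ a, (G.contract k0 hk).Kdiv (fun _ => 0) a * F a := by
  rw [Kdiv_contract, sum_pushforward_mul]

end Contraction

section Limit

variable [Fintype V] [DecidableEq E] {G : WMG V E} {k0 : E} {ℓ : E → ℝ}

theorem update_pos (hℓ : ∀ k ≠ k0, 0 < ℓ k) {t : ℝ} (ht : 0 < t) (k : E) :
    0 < Function.update ℓ k0 t k := by
  rcases eq_or_ne k k0 with rfl | hk
  · simpa using ht
  · simpa [hk] using hℓ k hk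

variable [Fintype E]

theorem lap_update_mulVec (t : ℝ) (v : V → ℝ) :
    G.lap (Function.update ℓ k0 t) *ᵥ v
      = G.lap ℓ *ᵥ v + ((t⁻¹ - (ℓ k0)⁻¹) * (v ⬝ᵥ G.incidence k0)) • G.incidence k0 := by
  rw [lap_mulVec, lap_mulVec, Fintype.sum_eq_add_sum_subtype_ne _ k0,
    Fintype.sum_eq_add_sum_subtype_ne _ k0]
  simp only [Function.update_self, fun k : {k // k ≠ k0} => Function.update_of_ne k.2 t ℓ]
  module

/-- Sherman–Morrison for the rank-one update `lap_update_mulVec`. -/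
theorem res_update_eq (hG : G.Connected) (hℓ : ∀ k, 0 < ℓ k) {t : ℝ} (ht : 0 < t)
    {a b : V} {h z : V → ℝ} (hh : G.lap ℓ *ᵥ h = delta a - delta b) (hhb : h b = 0)
    (hz : G.lap ℓ *ᵥ z = G.incidence k0) (hzb : z b = 0)
    (hD : ℓ k0 * t + (ℓ k0 - t) * (z ⬝ᵥ G.incidence k0) ≠ 0) :
    G.res (Function.update ℓ k0 t) a b
      = h a - (ℓ k0 - t) * (h ⬝ᵥ G.incidence k0)
          / (ℓ k0 * t + (ℓ k0 - t) * (z ⬝ᵥ G.incidence k0)) * z a := by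
  set c := (ℓ k0 - t) * (h ⬝ᵥ G.incidence k0) / (ℓ k0 * t + (ℓ k0 - t) * (z ⬝ᵥ G.incidence k0))
  have hc : c * (ℓ k0 * t + (ℓ k0 - t) * (z ⬝ᵥ G.incidence k0))
      = (ℓ k0 - t) * (h ⬝ᵥ G.incidence k0) := div_mul_cancel₀ _ hD
  clear_value c
  have hcoef : (t⁻¹ - (ℓ k0)⁻¹) * ((h - c • z) ⬝ᵥ G.incidence k0) = c := by
    rw [sub_dotProduct, smul_dotProduct, smul_eq_mul]
    field_simp [ht.ne', (hℓ k0).ne']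
    linear_combination -hc
  refine res_eq_of_lap_mulVec_eq hG (update_pos (fun k _ => hℓ k) ht) (v := h - c • z) ?_
    (by simp [hhb, hzb])
  rw [lap_update_mulVec, mulVec_sub, mulVec_smul, hh, hz, hcoef]
  abel

theorem eventually_pos_and_ne_zero {s R : ℝ} (hs : 0 < s) (hR : 0 < R) :
    ∀ᶠ t in 𝓝[>] (0 : ℝ), 0 < t ∧ s * t + (s - t) * R ≠ 0 := by
  have hcont : ContinuousAt (fun t : ℝ => s * t + (s - t) * R) 0 := by fun_prop
  have hne : s * 0 + (s - 0) * R ≠ 0 := by simpa using (mul_pos hs hR).ne'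
  exact eventually_mem_nhdsWithin.and (nhdsWithin_le_nhds (hcont.eventually_ne hne))

theorem tendsto_res_update_of_lap_mulVec (hG : G.Connected) (hℓ : ∀ k, 0 < ℓ k)
    {a b : V} {h z : V → ℝ} (hh : G.lap ℓ *ᵥ h = delta a - delta b) (hhb : h b = 0)
    (hz : G.lap ℓ *ᵥ z = G.incidence k0) (hzb : z b = 0) (hR : 0 < z ⬝ᵥ G.incidence k0) :
    Tendsto (fun t => G.res (Function.update ℓ k0 t) a b) (𝓝[>] 0)
      (𝓝 (h a - (h ⬝ᵥ G.incidence k0) / (z ⬝ᵥ G.incidence k0) * z a)) := by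
  set X := h ⬝ᵥ G.incidence k0
  set R := z ⬝ᵥ G.incidence k0
  have hcont : ContinuousAt
      (fun t => h a - (ℓ k0 - t) * X / (ℓ k0 * t + (ℓ k0 - t) * R) * z a) 0 := by
    refine continuousAt_const.sub ((ContinuousAt.div (by fun_prop) (by fun_prop) ?_).mul
      continuousAt_const)
    simp only [mul_zero, sub_zero, zero_add]
    exact (mul_pos (hℓ k0) hR).ne'
  have hlim := hcont.tendsto.mono_left (nhdsWithin_le_nhds (s := Set.Ioi 0))
  simp only [mul_zero, sub_zero, zero_add, mul_div_mul_left _ _ (hℓ k0).ne'] at hlim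
  refine hlim.congr' ?_
  filter_upwards [eventually_pos_and_ne_zero (hℓ k0) hR] with t ⟨ht, hD⟩
  exact (res_update_eq hG hℓ ht hh hhb hz hzb hD).symm

theorem res_contract_eq (hG : G.Connected) (hk : (G.ends k0).1 ≠ (G.ends k0).2)
    (hℓ : ∀ k ≠ k0, 0 < ℓ k) {a b : V} {w : V → ℝ} {c : ℝ}
    (hw : G.lap ℓ *ᵥ w = delta a - delta b + c • G.incidence k0)
    (hwk : w (G.ends k0).1 = w (G.ends k0).2) (hwb : w b = 0) :
    (G.contract k0 hk).res (fun k => ℓ k.1) (fuseV _ _ hk a) (fuseV _ _ hk b) = w a := by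
  rw [res_eq_of_lap_mulVec_eq (connected_contract G k0 hk hG) (fun k => hℓ k k.2)
    (v := fun y => w y), apply_val_fuseV hk hwk]
  · rw [lap_contract_mulVec G k0 hk ℓ hwk, hw]
    simp [pushforward_delta, pushforward_incidence_self]
  · rw [apply_val_fuseV hk hwk, hwb]

theorem tendsto_res_update (hG : G.Connected) (hk : (G.ends k0).1 ≠ (G.ends k0).2)
    (hℓ : ∀ k ≠ k0, 0 < ℓ k) (a b : V) :
    Tendsto (fun t => G.res (Function.update ℓ k0 t) a b) (𝓝[>] 0)
      (𝓝 ((G.contract k0 hk).res (fun k => ℓ k.1) (fuseV _ _ hk a) (fuseV _ _ hk b))) := by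
  set ℓ₁ := Function.update ℓ k0 1
  have hℓ₁ : ∀ k, 0 < ℓ₁ k := update_pos hℓ one_pos
  obtain ⟨h, ⟨hh, hhb⟩, -⟩ := existsUnique_lap_mulVec_eq hG hℓ₁ (sum_delta_sub_delta a b) b
  obtain ⟨z, ⟨hz, hzb⟩, -⟩ :=
    existsUnique_lap_mulVec_eq hG hℓ₁ (sum_delta_sub_delta (G.ends k0).1 (G.ends k0).2) b
  replace hz : G.lap ℓ₁ *ᵥ z = G.incidence k0 := hz
  have hR := dotProduct_incidence_pos hG hk hℓ₁ hz
  have hlim := tendsto_res_update_of_lap_mulVec hG hℓ₁ hh hhb hz hzb hR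
  simp only [ℓ₁, Function.update_idem] at hlim
  convert hlim using 2
  set c := (h ⬝ᵥ G.incidence k0) / (z ⬝ᵥ G.incidence k0)
  have hℓ₁_ne : (fun k : {k // k ≠ k0} => ℓ k.1) = fun k => ℓ₁ k.1 :=
    funext fun k => (Function.update_of_ne k.2 _ _).symm
  have hw : G.lap ℓ₁ *ᵥ (h - c • z) = delta a - delta b + (-c) • G.incidence k0 := by
    rw [mulVec_sub, mulVec_smul, hh, hz, neg_smul, sub_eq_add_neg]
  have hwk : (h - c • z) ⬝ᵥ G.incidence k0 = 0 := by
    rw [sub_dotProduct, smul_dotProduct, smul_eq_mul, div_mul_cancel₀ _ hR.ne', sub_self]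
  rw [dotProduct_incidence, sub_eq_zero] at hwk
  rw [hℓ₁_ne, res_contract_eq hG hk (fun k _ => hℓ₁ k) hw hwk (by simp [hhb, hzb])]
  simp [c]

theorem tendsto_res_update_div (hG : G.Connected) (hk : (G.ends k0).1 ≠ (G.ends k0).2)
    (hℓ : ∀ k ≠ k0, 0 < ℓ k) :
    Tendsto (fun t => G.res (Function.update ℓ k0 t) (G.ends k0).1 (G.ends k0).2 / t) (𝓝[>] 0)
      (𝓝 1) := by
  set ℓ₁ := Function.update ℓ k0 1
  have hℓ₁ : ∀ k, 0 < ℓ₁ k := update_pos hℓ one_pos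
  obtain ⟨z, ⟨hz, hzb⟩, -⟩ := existsUnique_lap_mulVec_eq hG hℓ₁
    (sum_delta_sub_delta (G.ends k0).1 (G.ends k0).2) (G.ends k0).2
  replace hz : G.lap ℓ₁ *ᵥ z = G.incidence k0 := hz
  set R := z ⬝ᵥ G.incidence k0 with hRdef
  have hR : 0 < R := dotProduct_incidence_pos hG hk hℓ₁ hz
  have hzp : z (G.ends k0).1 = R := by simp [R, dotProduct_incidence, hzb]
  have hcont : ContinuousAt (fun t : ℝ => R / (t + (1 - t) * R)) 0 :=
    continuousAt_const.div (by fun_prop) (by simpa using hR.ne')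
  have hlim := hcont.tendsto.mono_left (nhdsWithin_le_nhds (s := Set.Ioi 0))
  simp only [zero_add, sub_zero, one_mul, div_self hR.ne'] at hlim
  refine hlim.congr' ?_
  filter_upwards [eventually_pos_and_ne_zero one_pos hR] with t ⟨ht, hD⟩
  have hres := res_update_eq hG hℓ₁ ht hz hzb hz hzb (by simpa [ℓ₁] using hD)
  simp only [ℓ₁, Function.update_idem, Function.update_self, hzp, ← hRdef] at hres
  rw [one_mul] at hD hres
  rw [hres, div_eq_div_iff hD ht.ne', sub_mul, div_mul_eq_mul_div, div_mul_eq_mul_div,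
    mul_div_cancel_right₀ _ hD]
  ring

theorem tendsto_Fres_update_self (hG : G.Connected) (hk : (G.ends k0).1 ≠ (G.ends k0).2)
    (hℓ : ∀ k ≠ k0, 0 < ℓ k) :
    Tendsto (fun t => G.Fres (Function.update ℓ k0 t) k0) (𝓝[>] 0) (𝓝 0) := by
  simpa [Fres] using (tendsto_const_nhds (x := (1 : ℝ))).sub (tendsto_res_update_div hG hk hℓ)

theorem tendsto_Fres_update_of_ne (hG : G.Connected) (hk : (G.ends k0).1 ≠ (G.ends k0).2)
    (hℓ : ∀ k ≠ k0, 0 < ℓ k) (k : {k // k ≠ k0}) :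
    Tendsto (fun t => G.Fres (Function.update ℓ k0 t) k) (𝓝[>] 0)
      (𝓝 ((G.contract k0 hk).Fres (fun k => ℓ k.1) k)) := by
  simpa [Fres, contract, Function.update_of_ne k.2] using
    tendsto_const_nhds.sub ((tendsto_res_update hG hk hℓ _ _).div_const (ℓ k))

theorem tendsto_sum_Kdiv_mul (hk : (G.ends k0).1 ≠ (G.ends k0).2) {α : Type} {l : Filter α}
    {f : α → V → ℝ} {F : {y // y ≠ (G.ends k0).2} → ℝ}
    (h : ∀ a, Tendsto (fun x => f x a) l (𝓝 (F (fuseV _ _ hk a)))) :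
    Tendsto (fun x => ∑ a, G.Kdiv (fun _ => 0) a * f x a) l
      (𝓝 (∑ a, (G.contract k0 hk).Kdiv (fun _ => 0) a * F a)) := by
  rw [← sum_Kdiv_mul_fuseV]
  exact tendsto_finsetSum _ fun a _ => (h a).const_mul _

theorem tendsto_rKK_update (hG : G.Connected) (hk : (G.ends k0).1 ≠ (G.ends k0).2)
    (hℓ : ∀ k ≠ k0, 0 < ℓ k) :
    Tendsto (fun t => G.rKK (fun _ => 0) (Function.update ℓ k0 t)) (𝓝[>] 0)
      (𝓝 ((G.contract k0 hk).rKK (fun _ => 0) (fun k => ℓ k.1))) := by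
  simp only [rKK_eq_sum_mul]
  exact tendsto_sum_Kdiv_mul hk fun a => tendsto_sum_Kdiv_mul hk fun b =>
    tendsto_res_update hG hk hℓ a b

theorem tendsto_epsilon_update (hG : G.Connected) (hk : (G.ends k0).1 ≠ (G.ends k0).2)
    (hℓ : ∀ k ≠ k0, 0 < ℓ k) :
    Tendsto (fun t => G.epsilon (fun _ => 0) (Function.update ℓ k0 t)) (𝓝[>] 0)
      (𝓝 ((G.contract k0 hk).epsilon (fun _ => 0) (fun k => ℓ k.1))) := by
  have hF₀ := tendsto_Fres_update_self hG hk hℓ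
  have hF := tendsto_Fres_update_of_ne hG hk hℓ
  have ht : Tendsto (fun t : ℝ => t) (𝓝[>] 0) (𝓝 0) := tendsto_id.mono_left nhdsWithin_le_nhds
  simp only [epsilon_zero_polarization, genus_contract]
  refine ((tendsto_fintype_sum_of_tendsto_zero ?_ fun k => ?_).const_mul _).add
    ((tendsto_sum_Kdiv_mul hk fun a =>
      tendsto_fintype_sum_of_tendsto_zero ?_ fun k => ?_).const_mul _)
  · simpa using (hF₀.pow 2).mul ht
  · simpa [Function.update_of_ne k.2] using ((hF k).pow 2).mul_const (ℓ k)
  · simpa using hF₀.mul ((tendsto_res_update hG hk hℓ _ _).add (tendsto_res_update hG hk hℓ _ _))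
  · exact (hF k).mul ((tendsto_res_update hG hk hℓ _ _).add (tendsto_res_update hG hk hℓ _ _))

end Limit

end WMG

theorem stmt_11_general {V E : Type} [Fintype V] [DecidableEq V] [Fintype E] [DecidableEq E]
    (G : WMG V E) (hG : G.Connected)
    (k0 : E) (hk : (G.ends k0).1 ≠ (G.ends k0).2)
    (ℓ : E → ℝ) (hℓ : ∀ k, k ≠ k0 → 0 < ℓ k) :
    Filter.Tendsto (fun t : ℝ => G.phi (fun _ => 0) (Function.update ℓ k0 t))
      (nhdsWithin 0 (Set.Ioi 0))
      (nhds ((G.contract k0 hk).phi (fun _ => 0) (fun k => ℓ k.1))) := by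
  have hlength : Tendsto (fun t => ∑ k, Function.update ℓ k0 t k) (𝓝[>] 0)
      (𝓝 (∑ k : {k // k ≠ k0}, ℓ k)) :=
    tendsto_fintype_sum_of_tendsto_zero
      (by simp only [Function.update_self]; exact tendsto_id.mono_left nhdsWithin_le_nhds)
      fun k => by simp only [Function.update_of_ne k.2]; exact tendsto_const_nhds
  simp only [WMG.phi, WMG.genus_contract]
  exact (((WMG.tendsto_epsilon_update hG hk hℓ).const_mul _).sub
    ((WMG.tendsto_rKK_update hG hk hℓ).const_mul _)).sub (hlength.div_const 4)

/-- Let `G` be a connected weighted multigraph in which every vertex has valence `≥ 2`,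
polarized by `q ≡ 0`, of genus `g = m - n + 1 ≥ 2`, and let `e_1` be a non-loop edge.
Then for all fixed positive lengths `ℓ_2, …, ℓ_m`,
`lim_{t → 0+} φ_G(t, ℓ_2, …, ℓ_m) = φ_{G/e_1}(ℓ_2, …, ℓ_m)`,
where `G/e_1` carries the polarization `q ≡ 0`. -/
theorem stmt_11 {V E : Type} [Fintype V] [DecidableEq V] [Fintype E] [DecidableEq E]
    (G : WMG V E) (hG : G.Connected) (hval : ∀ a, 2 ≤ G.valence a)
    (hg : 2 ≤ G.genus (fun _ => 0))
    (k0 : E) (hk : (G.ends k0).1 ≠ (G.ends k0).2)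
    (ℓ : E → ℝ) (hℓ : ∀ k, k ≠ k0 → 0 < ℓ k) :
    Filter.Tendsto (fun t : ℝ => G.phi (fun _ => 0) (Function.update ℓ k0 t))
      (nhdsWithin 0 (Set.Ioi 0))
      (nhds ((G.contract k0 hk).phi (fun _ => 0) (fun k => ℓ k.1))) :=
  stmt_11_general G hG k0 hk ℓ hℓ
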